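/- For integers a ≥ 1, b ≥ 0 and c ≥ 2, the chromatic symmetric function of the barbell satisfies X_{K(a1^b c)} = c! · X_{K(a 1^{b+c})} − Σ_{i=0}^{c−2} (c! · (c − i − 1)/(c − i)!) · X_{K_{c−i}} · X_{K(a 1^{b+i})}. -/

import Mathlib

open Finset

/-- Symmetric functions in countably many variables `x_0, x_1, x_2, …`, realized inside
the ring of formal multivariate power series over `ℚ`. -/
abbrev SymF : Type := MvPowerSeries ℕ ℚ

open Classical in
/-- The elementary symmetric function `e_k`: the sum of all squarefree monomials of
degree `k` (so `e_0 = 1`). -/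
noncomputable def esymm (k : ℕ) : SymF :=
  fun d : ℕ →₀ ℕ =>
    if (d.sum fun _ e => e) = k ∧ ∀ i, d i ≤ 1 then (1 : ℚ) else 0

/-- `e_I = e_{i_1} ⋯ e_{i_s}` for a list `I = [i_1, …, i_s]`. -/
noncomputable def esymmProd (I : List ℕ) : SymF := (I.map esymm).prod

open Classical in
/-- The chromatic symmetric function `X_G = Σ_κ ∏_v x_{κ v}`, summed over proper colorings
`κ : V → ℕ`: the coefficient of the monomial with exponent vector `d` is the number of
proper colorings all of whose color fibres have the sizes recorded by `d`. -/
noncomputable def csf {V : Type} [Finite V] (G : SimpleGraph V) : SymF :=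
  fun d : ℕ →₀ ℕ =>
    (({κ : V → ℕ | (∀ v w, G.Adj v w → κ v ≠ κ w) ∧
        ∀ i : ℕ, {v | κ v = i}.ncard = d i}).ncard : ℚ)

/-- The barbell `K(a 1^b c)` on `a + b + c` vertices: a clique on `{0, …, a-1}`, a path
`a-1, a, …, a+b-1`, and a clique on `{a+b-1, …, a+b+c-1}` (the `K`-chain of the
composition `(a, 1, …, 1, c)` with `b` middle parts `1`). -/
def barbellG (a b c : ℕ) : SimpleGraph (Fin (a + b + c)) :=
  SimpleGraph.fromRel (fun i j =>
    ((i : ℕ) < a ∧ (j : ℕ) < a) ∨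
    ((i : ℕ) + 1 = (j : ℕ) ∧ a ≤ (j : ℕ) ∧ (j : ℕ) + 1 ≤ a + b) ∨
    (a + b ≤ (i : ℕ) + 1 ∧ a + b ≤ (j : ℕ) + 1))

/-!
Cut the barbell `K(a1^b c)` and the lollipops `K(a1^{b+m})` at the last vertex `v` of their
common lollipop `L = K(a1^b)`. Sorting colourings by the colour `j` of `v` writes each of their
chromatic symmetric functions as `∑_j R_j T_j`: `R_j` counts colourings of `L` with `v ↦ j`, and
`T_j` counts colourings of the part hanging off `v` in which the neighbours of `v` avoid `j`,
namely injective colourings `C_c^j` of `K_c` avoiding `j` (`cliqueTail`) for the barbell, and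
colourings `P_m^j` of the path `P_m` whose first vertex avoids `j` (`pathTail`) for the lollipop.
Since `X_{K_n} = n! e_n`, and multiplication by `e_n` commutes with `∑_j` (because `x_j ∣ R_j`),
the theorem reduces to `c! P_c^j = C_c^j + ∑_{i<c} c!(c-i-1) e_{c-i} P_i^j` for every `j`. This
follows by induction on `c` from `P_{c+1}^j = ∑_{k≠j} x_k P_c^k` (remove the first vertex of the
path) and `(c+1) ∑_{k≠j} x_k C_c^k = C_{c+1}^j + (c+1)! c e_{c+1}`.
-/

open MvPowerSeries
open SimpleGraph (pathGraph pathGraph_adj)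

section FibreSizes

variable {U V W : Type} [Fintype V]

noncomputable def fibreSizes (κ : V → ℕ) : ℕ →₀ ℕ :=
  ∑ v, Finsupp.single (κ v) 1

lemma fibreSizes_apply (κ : V → ℕ) (k : ℕ) : fibreSizes κ k = #{v | κ v = k} := by
  simp only [fibreSizes, Finsupp.finsetSum_apply, Finsupp.single_apply, Finset.card_filter]

lemma fibreSizes_apply_eq_zero_iff (κ : V → ℕ) (k : ℕ) :
    fibreSizes κ k = 0 ↔ ∀ v, κ v ≠ k := by
  simp [fibreSizes_apply, Finset.filter_eq_empty_iff]

lemma fibreSizes_apply_self_ne_zero (κ : V → ℕ) (v : V) : fibreSizes κ (κ v) ≠ 0 :=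
  fun h => (fibreSizes_apply_eq_zero_iff κ _).1 h v rfl

lemma degree_fibreSizes (κ : V → ℕ) : (fibreSizes κ).degree = Fintype.card V := by
  simp [fibreSizes, map_sum]

lemma support_fibreSizes [DecidableEq V] (κ : V → ℕ) :
    (fibreSizes κ).support = univ.image κ := by
  ext k
  rw [Finsupp.mem_support_iff, Ne, fibreSizes_apply_eq_zero_iff]
  simp [eq_comm]

lemma injective_iff_fibreSizes_le_one (κ : V → ℕ) :
    Function.Injective κ ↔ ∀ k, fibreSizes κ k ≤ 1 := by
  simp only [fibreSizes_apply, Finset.card_le_one, Finset.mem_filter, Finset.mem_univ, true_and]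
  exact ⟨fun h k v hv w hw => h (hv.trans hw.symm), fun h v w hvw => h _ v hvw w rfl⟩

lemma fibreSizes_comp_equiv [Fintype W] (σ : W ≃ V) (κ : V → ℕ) :
    fibreSizes (κ ∘ σ) = fibreSizes κ :=
  σ.sum_comp fun v => Finsupp.single (κ v) 1

lemma fibreSizes_sum [Fintype U] [Fintype W] (κ : W ⊕ U → ℕ) :
    fibreSizes κ = fibreSizes (κ ∘ Sum.inl) + fibreSizes (κ ∘ Sum.inr) :=
  Fintype.sum_sum_type _

lemma fibreSizes_cons {m : ℕ} (k : ℕ) (g : Fin m → ℕ) :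
    fibreSizes (Fin.cons k g : Fin (m + 1) → ℕ) = Finsupp.single k 1 + fibreSizes g :=
  Fin.sum_univ_succ _

lemma finite_setOf_fibreSizes_eq (e : ℕ →₀ ℕ) : {κ : V → ℕ | fibreSizes κ = e}.Finite := by
  refine (Set.Finite.pi (t := fun _ : V => (e.support : Set ℕ))
    fun _ => e.support.finite_toSet).subset ?_
  rintro κ rfl
  simp [fibreSizes_apply_self_ne_zero]

end FibreSizes

lemma Nat.card_eq_sum_card_fiberwise {α ι : Type*} [DecidableEq ι] {p : α → Prop}
    (hp : {x | p x}.Finite) (φ : α → ι) (t : Finset ι) (h : ∀ x, p x → φ x ∈ t) :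
    Nat.card {x // p x} = ∑ i ∈ t, Nat.card {x // p x ∧ φ x = i} := by
  have hfib (i : ι) : {x | p x ∧ φ x = i}.Finite := hp.subset fun x hx => hx.1
  change Nat.card {x | p x} = ∑ i ∈ t, Nat.card {x | p x ∧ φ x = i}
  rw [Nat.card_eq_card_finite_toFinset hp,
    Finset.card_eq_sum_card_fiberwise (f := φ) (t := t) (fun x hx => h x (by simpa using hx))]
  refine Finset.sum_congr rfl fun i _ => ?_
  rw [Nat.card_eq_card_finite_toFinset (hfib i)]
  congr 1
  ext x
  simp

section Colorings

variable {U V V' : Type}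

def IsProperColoring (G : SimpleGraph V) (κ : V → ℕ) : Prop :=
  ∀ v w, G.Adj v w → κ v ≠ κ w

lemma isProperColoring_top_iff (κ : V → ℕ) :
    IsProperColoring ⊤ κ ↔ Function.Injective κ := by
  refine ⟨fun h v w hvw => by_contra fun hne => h v w hne hvw, fun h v w hne => h.ne hne⟩

lemma SimpleGraph.Iso.isProperColoring_comp_iff {G : SimpleGraph V} {G' : SimpleGraph V'}
    (f : G ≃g G') (κ : V' → ℕ) : IsProperColoring G (κ ∘ f) ↔ IsProperColoring G' κ := by
  refine ⟨fun h v w hvw => ?_, fun h v w hvw => h _ _ (f.map_adj_iff.2 hvw)⟩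
  simpa using h (f.symm v) (f.symm w) (f.symm.map_adj_iff.2 hvw)

lemma coeff_csf [Fintype V] (G : SimpleGraph V) (d : ℕ →₀ ℕ) :
    coeff d (csf G) = Nat.card {κ : V → ℕ // IsProperColoring G κ ∧ fibreSizes κ = d} := by
  have hfib (κ : V → ℕ) (i : ℕ) : {v | κ v = i}.ncard = fibreSizes κ i := by
    rw [fibreSizes_apply, Set.ncard_eq_toFinset_card']
    simp [Finset.filter]
  simp only [coeff_apply, csf, hfib, ← DFunLike.ext_iff]
  rfl

lemma SimpleGraph.Iso.csf_eq [Fintype V] [Fintype V'] {G : SimpleGraph V} {G' : SimpleGraph V'}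
    (f : G ≃g G') : csf G = csf G' := by
  ext d
  rw [coeff_csf, coeff_csf]
  refine congrArg _ (Nat.card_congr (Equiv.subtypeEquiv (f.toEquiv.symm.arrowCongr (.refl ℕ))
    fun κ => ?_)).symm
  rw [← f.isProperColoring_comp_iff, ← fibreSizes_comp_equiv f.toEquiv]
  rfl

open Classical in
lemma coeff_esymm (n : ℕ) (d : ℕ →₀ ℕ) :
    coeff d (esymm n) = if d.degree = n ∧ ∀ i, d i ≤ 1 then 1 else 0 :=
  rfl

lemma Finsupp.degree_eq_card_support_of_le_one {d : ℕ →₀ ℕ} (hd : ∀ i, d i ≤ 1) :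
    d.degree = #d.support := by
  rw [Finsupp.degree_apply, Finset.card_eq_sum_ones]
  refine Finset.sum_congr rfl fun i hi => ?_
  have := Finsupp.mem_support_iff.1 hi
  have := hd i
  omega

lemma coeff_esymm_succ {e : ℕ →₀ ℕ} {k : ℕ} (hk : e k ≠ 0) (n : ℕ) :
    coeff e (esymm (n + 1)) = if (e - Finsupp.single k 1 : ℕ →₀ ℕ) k = 0 then
      coeff (e - Finsupp.single k 1) (esymm n) else 0 := by
  classical
  have hle : Finsupp.single k 1 ≤ e := Finsupp.single_le_iff.2 (Nat.pos_of_ne_zero hk)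
  have hdeg : (e - Finsupp.single k 1).degree + 1 = e.degree := by
    conv_rhs => rw [← tsub_add_cancel_of_le hle]
    rw [map_add, Finsupp.degree_single]
  have happ (i : ℕ) : (e - Finsupp.single k 1 : ℕ →₀ ℕ) i = e i - if k = i then 1 else 0 := by
    rw [Finsupp.tsub_apply, Finsupp.single_apply]
  rw [coeff_esymm, coeff_esymm, ← ite_and]
  refine if_congr ⟨fun ⟨hd, h1⟩ => ⟨?_, by omega, fun i => ?_⟩, fun ⟨h0, hd, h1⟩ => ⟨by omega,
    fun i => ?_⟩⟩ rfl rfl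
  · have := h1 k
    rw [happ, if_pos rfl]
    omega
  · have := h1 i
    rw [happ]
    split_ifs <;> omega
  · rw [happ, if_pos rfl] at h0
    have := h1 i
    rw [happ] at this
    split_ifs at this with hi
    · subst hi
      omega
    · omega

lemma natCard_injective_fibreSizes_eq [Fintype U] (e : ℕ →₀ ℕ) :
    (Nat.card {g : U → ℕ // Function.Injective g ∧ fibreSizes g = e} : ℚ) =
      (Fintype.card U).factorial * coeff e (esymm (Fintype.card U)) := by
  classical
  rw [coeff_esymm]
  split_ifs with he
  · have hsupp : #e.support = Fintype.card U := Finsupp.degree_eq_card_support_of_le_one he.2 ▸ he.1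
    have hiff (g : U → ℕ) : Function.Injective g ∧ fibreSizes g = e ↔
        Function.Injective g ∧ ∀ u, g u ∈ e.support := by
      refine and_congr_right fun hinj => ⟨?_, fun hmem => ?_⟩
      · rintro rfl u
        exact Finsupp.mem_support_iff.2 (fibreSizes_apply_self_ne_zero g u)
      have himage : univ.image g = e.support :=
        Finset.eq_of_subset_of_card_le (by simpa [Finset.subset_iff] using hmem)
          (by rw [card_image_of_injective _ hinj, hsupp, card_univ])
      ext k
      have hg := (injective_iff_fibreSizes_le_one g).1 hinj k
      have he := he.2 k
      have hsame : fibreSizes g k ≠ 0 ↔ e k ≠ 0 := by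
        rw [← Finsupp.mem_support_iff, ← Finsupp.mem_support_iff, support_fibreSizes, himage]
      omega
    let toEmbedding : {g : U → ℕ // Function.Injective g ∧ ∀ u, g u ∈ e.support} ≃
        (U ↪ e.support) :=
      { toFun g := ⟨fun u => ⟨g.1 u, g.2.2 u⟩, fun u v h => g.2.1 (congrArg Subtype.val h)⟩
        invFun φ := ⟨fun u => φ u, fun u v h => φ.injective (Subtype.ext h), fun u => (φ u).2⟩
        left_inv _ := rfl
        right_inv _ := rfl }
    rw [Nat.card_congr ((Equiv.subtypeEquivRight hiff).trans toEmbedding), Nat.card_eq_fintype_card,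
      Fintype.card_embedding_eq, Fintype.card_coe, hsupp, Nat.descFactorial_self, mul_one]
  · rw [mul_zero, Nat.cast_eq_zero, Nat.card_eq_zero]
    refine .inl ⟨fun ⟨g, hinj, hg⟩ => he ?_⟩
    rw [← hg, degree_fibreSizes]
    exact ⟨rfl, (injective_iff_fibreSizes_le_one g).1 hinj⟩

lemma csf_top (n : ℕ) : csf (⊤ : SimpleGraph (Fin n)) = (n.factorial : ℚ) • esymm n := by
  ext d
  simp only [coeff_csf, isProperColoring_top_iff, natCard_injective_fibreSizes_eq,
    Fintype.card_fin, map_smul, smul_eq_mul]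

end Colorings

/-- `rootSum F` is `∑ⱼ F j`, meant for families in which `x_j` divides `F j`: that sum is then
locally finite, and its `d`-coefficient only involves the `j` in the support of `d`. -/
noncomputable def rootSum : (ℕ → SymF) →ₗ[ℚ] SymF where
  toFun F d := ∑ j ∈ d.support, coeff d (F j)
  map_add' _ _ := funext fun _ => Finset.sum_add_distrib
  map_smul' _ _ := funext fun _ => (Finset.mul_sum ..).symm

lemma coeff_rootSum (F : ℕ → SymF) (d : ℕ →₀ ℕ) :
    coeff d (rootSum F) = ∑ j ∈ d.support, coeff d (F j) :=
  rfl

lemma mul_rootSum (φ : SymF) {F : ℕ → SymF} (hF : ∀ j, X j ∣ F j) :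
    φ * rootSum F = rootSum fun j => φ * F j := by
  ext d
  simp only [coeff_mul, coeff_rootSum, Finset.mul_sum]
  rw [Finset.sum_comm]
  refine Finset.sum_congr rfl fun q hq => Finset.sum_subset (fun j hj => ?_) fun j _ hj => ?_
  · rw [HasAntidiagonal.mem_antidiagonal] at hq
    rw [Finsupp.mem_support_iff] at hj ⊢
    rw [← hq, Finsupp.add_apply]
    omega
  · rw [X_dvd_iff.1 (hF j) _ (Finsupp.notMem_support_iff.1 hj), mul_zero]

section Gluing

variable {W U : Type}

def rootJoin (H : SimpleGraph W) (r : W) (S : Set U) (K : SimpleGraph U) :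
    SimpleGraph (W ⊕ U) where
  Adj
    | .inl v, .inl w => H.Adj v w
    | .inl v, .inr t => v = r ∧ t ∈ S
    | .inr s, .inl w => w = r ∧ s ∈ S
    | .inr s, .inr t => K.Adj s t
  symm := ⟨by
    rintro (v | s) (w | t) h
    exacts [h.symm, h, h, h.symm]⟩
  loopless := ⟨by
    rintro (v | s) h
    exacts [H.loopless.irrefl v h, K.loopless.irrefl s h]⟩

lemma isProperColoring_rootJoin_iff {H : SimpleGraph W} {r : W} {S : Set U} {K : SimpleGraph U}
    (κ : W ⊕ U → ℕ) :
    IsProperColoring (rootJoin H r S K) κ ↔ IsProperColoring H (κ ∘ .inl) ∧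
      (∀ t ∈ S, κ (.inr t) ≠ κ (.inl r)) ∧ IsProperColoring K (κ ∘ .inr) := by
  refine ⟨fun h => ⟨fun v w hvw => h _ _ hvw, fun t ht => h (.inr t) (.inl r) ⟨rfl, ht⟩,
    fun s t hst => h _ _ hst⟩, ?_⟩
  rintro ⟨hH, hS, hK⟩ (v | s) (w | t) hadj
  · exact hH v w hadj
  · obtain ⟨rfl, ht⟩ := hadj
    exact (hS t ht).symm
  · obtain ⟨rfl, hs⟩ := hadj
    exact hS s hs
  · exact hK s t hadj

variable [Fintype W] [Fintype U]

noncomputable def rootedCsf (H : SimpleGraph W) (r : W) (j : ℕ) : SymF :=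
  fun e => Nat.card {κ : W → ℕ // IsProperColoring H κ ∧ κ r = j ∧ fibreSizes κ = e}

noncomputable def avoidingCsf (K : SimpleGraph U) (S : Set U) (j : ℕ) : SymF :=
  fun e => Nat.card {g : U → ℕ // IsProperColoring K g ∧ (∀ t ∈ S, g t ≠ j) ∧ fibreSizes g = e}

lemma coeff_rootedCsf (H : SimpleGraph W) (r : W) (j : ℕ) (e : ℕ →₀ ℕ) :
    coeff e (rootedCsf H r j) =
      Nat.card {κ : W → ℕ // IsProperColoring H κ ∧ κ r = j ∧ fibreSizes κ = e} :=
  rfl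

lemma coeff_avoidingCsf (K : SimpleGraph U) (S : Set U) (j : ℕ) (e : ℕ →₀ ℕ) :
    coeff e (avoidingCsf K S j) =
      Nat.card {g : U → ℕ // IsProperColoring K g ∧ (∀ t ∈ S, g t ≠ j) ∧ fibreSizes g = e} :=
  rfl

lemma coeff_rootedCsf_eq_zero (H : SimpleGraph W) (r : W) {j : ℕ} {e : ℕ →₀ ℕ} (he : e j = 0) :
    coeff e (rootedCsf H r j) = 0 := by
  rw [coeff_rootedCsf, Nat.cast_eq_zero, Nat.card_eq_zero]
  refine .inl ⟨fun ⟨κ, _, hκr, hκ⟩ => fibreSizes_apply_self_ne_zero κ r ?_⟩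
  rwa [hκ, hκr]

lemma csf_rootJoin (H : SimpleGraph W) (r : W) (S : Set U) (K : SimpleGraph U) :
    csf (rootJoin H r S K) = rootSum fun j => rootedCsf H r j * avoidingCsf K S j := by
  ext d
  rw [coeff_csf, coeff_rootSum, Nat.card_eq_sum_card_fiberwise
    ((finite_setOf_fibreSizes_eq d).subset fun _ h => h.2)
    (fun κ => ((fibreSizes (κ ∘ .inl), fibreSizes (κ ∘ .inr)), κ (.inl r)))
    (antidiagonal d ×ˢ d.support) ?maps, Finset.sum_product, Finset.sum_comm, Nat.cast_sum]
  case maps =>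
    rintro κ ⟨-, rfl⟩
    refine Finset.mem_product.2 ⟨HasAntidiagonal.mem_antidiagonal.2 (fibreSizes_sum κ).symm, ?_⟩
    exact Finsupp.mem_support_iff.2 (fibreSizes_apply_self_ne_zero κ _)
  refine Finset.sum_congr rfl fun j _ => ?_
  rw [coeff_mul, Nat.cast_sum]
  refine Finset.sum_congr rfl fun ⟨p₁, p₂⟩ hp => ?_
  rw [HasAntidiagonal.mem_antidiagonal] at hp
  rw [coeff_rootedCsf, coeff_avoidingCsf, ← Nat.cast_mul, ← Nat.card_prod]
  refine congrArg _ (Nat.card_congr ((Equiv.subtypeEquiv (Equiv.sumArrowEquivProdArrow W U ℕ)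
    fun κ => ?_).trans Equiv.subtypeProdEquivProd))
  rw [isProperColoring_rootJoin_iff, fibreSizes_sum κ, Prod.mk.injEq, Prod.mk.injEq]
  constructor
  · rintro ⟨⟨⟨hH, hS, hK⟩, -⟩, ⟨h₁, h₂⟩, rfl⟩
    exact ⟨⟨hH, rfl, h₁⟩, hK, hS, h₂⟩
  · rintro ⟨⟨hH, rfl, h₁⟩, hK, hS, h₂⟩
    exact ⟨⟨⟨hH, hS, hK⟩, by rw [← hp, ← h₁, ← h₂]; rfl⟩, ⟨h₁, h₂⟩, rfl⟩

end Gluing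

/-- `sumXExcept j F = ∑_{k ≠ j} X k * F k`. -/
noncomputable def sumXExcept (j : ℕ) : (ℕ → SymF) →ₗ[ℚ] SymF :=
  rootSum ∘ₗ LinearMap.pi fun k =>
    if k = j then 0 else LinearMap.mulLeft ℚ (X k) ∘ₗ LinearMap.proj k

lemma sumXExcept_apply (j : ℕ) (F : ℕ → SymF) :
    sumXExcept j F = rootSum fun k => if k = j then 0 else X k * F k := by
  refine congrArg rootSum (funext fun k => ?_)
  by_cases hk : k = j <;> simp [hk]

lemma coeff_sumXExcept (j : ℕ) (F : ℕ → SymF) (e : ℕ →₀ ℕ) :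
    coeff e (sumXExcept j F) = ∑ k ∈ e.support.erase j, coeff (e - Finsupp.single k 1) (F k) := by
  rw [sumXExcept_apply, coeff_rootSum, ← Finset.filter_ne', Finset.sum_filter]
  refine Finset.sum_congr rfl fun k hk => ?_
  by_cases hkj : k = j
  · simp [hkj]
  · rw [if_neg hkj, if_pos hkj, X_def, coeff_monomial_mul,
      if_pos (Finsupp.single_le_iff.2 (Nat.pos_of_ne_zero (Finsupp.mem_support_iff.1 hk))), one_mul]

lemma mul_sumXExcept (j : ℕ) (φ : SymF) (F : ℕ → SymF) :
    φ * sumXExcept j F = sumXExcept j fun k => φ * F k := by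
  rw [sumXExcept_apply, sumXExcept_apply, mul_rootSum]
  · refine congrArg rootSum (funext fun k => ?_)
    split_ifs
    exacts [mul_zero φ, mul_left_comm _ _ _]
  · intro k
    split_ifs
    exacts [dvd_zero _, dvd_mul_right _ _]

section Tails

variable {U : Type} [Fintype U]

lemma coeff_avoidingCsf_top (j : ℕ) (e : ℕ →₀ ℕ) :
    coeff e (avoidingCsf (⊤ : SimpleGraph U) Set.univ j) =
      if e j = 0 then (Fintype.card U).factorial * coeff e (esymm (Fintype.card U)) else 0 := by
  rw [coeff_avoidingCsf]
  simp only [isProperColoring_top_iff, Set.mem_univ, true_imp_iff]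
  split_ifs with hj
  · rw [← natCard_injective_fibreSizes_eq]
    refine congrArg _ (Nat.card_congr (Equiv.subtypeEquivRight fun g => ?_))
    refine ⟨fun ⟨hinj, _, hg⟩ => ⟨hinj, hg⟩, fun ⟨hinj, hg⟩ => ⟨hinj, ?_, hg⟩⟩
    rwa [← fibreSizes_apply_eq_zero_iff, hg]
  · rw [Nat.cast_eq_zero, Nat.card_eq_zero]
    refine .inl ⟨fun ⟨g, _, hgj, hg⟩ => hj ?_⟩
    rwa [← hg, fibreSizes_apply_eq_zero_iff]

noncomputable abbrev cliqueTail (n j : ℕ) : SymF :=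
  avoidingCsf (⊤ : SimpleGraph (Fin n)) Set.univ j

lemma smul_sumXExcept_cliqueTail (n j : ℕ) :
    ((n + 1 : ℕ) : ℚ) • sumXExcept j (cliqueTail n) =
      cliqueTail (n + 1) j + (((n + 1).factorial * n : ℕ) : ℚ) • esymm (n + 1) := by
  ext e
  have hterm (k) (hk : k ∈ e.support.erase j) :
      coeff (e - Finsupp.single k 1) (cliqueTail n k) = n.factorial * coeff e (esymm (n + 1)) := by
    rw [coeff_avoidingCsf_top, Fintype.card_fin,
      coeff_esymm_succ (Finsupp.mem_support_iff.1 (Finset.mem_of_mem_erase hk))]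
    split_ifs <;> simp
  rw [map_smul, coeff_sumXExcept, Finset.sum_congr rfl hterm, map_add, map_smul,
    coeff_avoidingCsf_top, Fintype.card_fin, Finset.sum_const, nsmul_eq_mul, coeff_esymm]
  split_ifs with he hj
  · rw [Finset.erase_eq_of_notMem (by simpa using hj),
      ← Finsupp.degree_eq_card_support_of_le_one he.2, he.1]
    push_cast [Nat.factorial_succ]
    ring
  · rw [Finset.card_erase_of_mem (Finsupp.mem_support_iff.2 hj),
      ← Finsupp.degree_eq_card_support_of_le_one he.2, he.1, Nat.add_sub_cancel]
    push_cast [Nat.factorial_succ]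
    ring
  all_goals simp

noncomputable abbrev pathTail (m j : ℕ) : SymF :=
  avoidingCsf (pathGraph m) {t | (t : ℕ) = 0} j

lemma pathTail_zero (j : ℕ) : pathTail 0 j = 1 := by
  ext e
  rw [pathTail, coeff_avoidingCsf, coeff_one]
  have hfib (g : Fin 0 → ℕ) : fibreSizes g = 0 := Finset.sum_empty
  split_ifs with he
  · rw [Nat.card_eq_one_iff_unique.2 ⟨⟨fun g g' => Subtype.ext (Subsingleton.elim _ _)⟩,
      ⟨⟨Fin.elim0, fun v => v.elim0, fun t => t.elim0, by rw [hfib, he]⟩⟩⟩, Nat.cast_one]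
  · rw [Nat.cast_eq_zero, Nat.card_eq_zero]
    exact .inl ⟨fun ⟨g, _, _, hg⟩ => he (hg ▸ hfib g)⟩

lemma isProperColoring_pathGraph_cons {m : ℕ} (k : ℕ) (g : Fin m → ℕ) :
    IsProperColoring (pathGraph (m + 1)) (Fin.cons k g) ↔
      (∀ t ∈ {t : Fin m | (t : ℕ) = 0}, g t ≠ k) ∧ IsProperColoring (pathGraph m) g := by
  refine ⟨fun h => ⟨fun t ht => (h 0 t.succ (pathGraph_adj.2 (.inl (by simpa using ht)))).symm,
    fun s t hst => h s.succ t.succ (by simpa [pathGraph_adj] using hst)⟩, ?_⟩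
  rintro ⟨h0, hg⟩ v w hvw
  induction v using Fin.cases with
  | zero =>
    induction w using Fin.cases with
    | zero => exact absurd hvw (SimpleGraph.irrefl _)
    | succ t =>
      simp only [Fin.cons_zero, Fin.cons_succ]
      exact (h0 t (by simpa [pathGraph_adj] using hvw)).symm
  | succ s =>
    induction w using Fin.cases with
    | zero =>
      simp only [Fin.cons_zero, Fin.cons_succ]
      exact h0 s (by simpa [pathGraph_adj] using hvw)
    | succ t =>
      simp only [Fin.cons_succ]
      exact hg s t (by simpa [pathGraph_adj] using hvw)

lemma cons_pathColoring_iff {m j k : ℕ} {e : ℕ →₀ ℕ} (hkj : k ≠ j)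
    (hke : Finsupp.single k 1 ≤ e) (g : Fin m → ℕ) :
    (IsProperColoring (pathGraph (m + 1)) (Fin.cons k g) ∧
      (∀ t ∈ {t : Fin (m + 1) | (t : ℕ) = 0}, (Fin.cons k g : Fin (m + 1) → ℕ) t ≠ j) ∧
      fibreSizes (Fin.cons k g : Fin (m + 1) → ℕ) = e) ↔
    IsProperColoring (pathGraph m) g ∧ (∀ t ∈ {t : Fin m | (t : ℕ) = 0}, g t ≠ k) ∧
      fibreSizes g = e - Finsupp.single k 1 := by
  have hroot : ∀ t ∈ {t : Fin (m + 1) | (t : ℕ) = 0}, (Fin.cons k g : Fin (m + 1) → ℕ) t ≠ j :=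
    fun t ht => by rwa [show t = 0 from Fin.ext ht, Fin.cons_zero]
  have hfib : fibreSizes (Fin.cons k g : Fin (m + 1) → ℕ) = e ↔
      fibreSizes g = e - Finsupp.single k 1 := by
    rw [fibreSizes_cons, eq_tsub_iff_add_eq_of_le hke, add_comm]
  rw [isProperColoring_pathGraph_cons, hfib]
  tauto

lemma pathTail_succ (m j : ℕ) : pathTail (m + 1) j = sumXExcept j (pathTail m) := by
  ext e
  rw [coeff_sumXExcept, pathTail, coeff_avoidingCsf, Nat.card_eq_sum_card_fiberwise
    ((finite_setOf_fibreSizes_eq e).subset fun _ h => h.2.2) (fun g => g 0) (e.support.erase j)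
    ?maps, Nat.cast_sum]
  case maps =>
    rintro g ⟨-, hgj, rfl⟩
    exact Finset.mem_erase.2
      ⟨hgj 0 rfl, Finsupp.mem_support_iff.2 (fibreSizes_apply_self_ne_zero g 0)⟩
  refine Finset.sum_congr rfl fun k hk => ?_
  obtain ⟨hkj, hke⟩ := Finset.mem_erase.1 hk
  have hiff := cons_pathColoring_iff (m := m) hkj
    (Finsupp.single_le_iff.2 (Nat.pos_of_ne_zero (Finsupp.mem_support_iff.1 hke)))
  have hcons (g : Fin (m + 1) → ℕ) (hg : g 0 = k) : Fin.cons k (Fin.tail g) = g :=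
    hg ▸ Fin.cons_self_tail g
  rw [pathTail, coeff_avoidingCsf]
  refine congrArg _ (Nat.card_congr
    { toFun g := ⟨Fin.tail g.1, (hiff _).1 (by rw [hcons _ g.2.2]; exact g.2.1)⟩
      invFun g := ⟨Fin.cons k g.1, (hiff _).2 g.2, Fin.cons_zero _ _⟩
      left_inv g := Subtype.ext (hcons _ g.2.2)
      right_inv g := Subtype.ext (Fin.tail_cons (α := fun _ => ℕ) k g.1) })

lemma cliqueTail_zero (j : ℕ) : cliqueTail 0 j = 1 := by
  ext e
  rw [coeff_avoidingCsf_top, coeff_one, coeff_esymm]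
  by_cases he : e = 0 <;> simp [he, Finsupp.degree_eq_zero_iff]

theorem factorial_smul_pathTail (c j : ℕ) :
    (c.factorial : ℚ) • pathTail c j = cliqueTail c j +
      ∑ i ∈ range c, ((c.factorial * (c - i - 1) : ℕ) : ℚ) • (esymm (c - i) * pathTail i j) := by
  induction c generalizing j with
  | zero => simp [pathTail_zero, cliqueTail_zero]
  | succ n ih =>
    have hfamily : (n.factorial : ℚ) • pathTail n = cliqueTail n + ∑ i ∈ range n,
        ((n.factorial * (n - i - 1) : ℕ) : ℚ) • fun k => esymm (n - i) * pathTail i k :=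
      funext fun k => by simpa [Finset.sum_apply] using ih k
    calc ((n + 1).factorial : ℚ) • pathTail (n + 1) j
        = ((n + 1 : ℕ) : ℚ) • sumXExcept j ((n.factorial : ℚ) • pathTail n) := by
          rw [pathTail_succ, map_smul, smul_smul, Nat.factorial_succ, Nat.cast_mul]
      _ = ((n + 1 : ℕ) : ℚ) • sumXExcept j (cliqueTail n) + ∑ i ∈ range n,
            (((n + 1).factorial * (n - i - 1) : ℕ) : ℚ) • (esymm (n - i) * pathTail (i + 1) j) := by
          rw [hfamily, map_add, map_sum, smul_add, Finset.smul_sum]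
          refine congrArg _ (Finset.sum_congr rfl fun i _ => ?_)
          rw [map_smul, ← mul_sumXExcept, ← pathTail_succ, smul_smul, Nat.factorial_succ]
          push_cast
          ring_nf
      _ = _ := by
          rw [smul_sumXExcept_cliqueTail, Finset.sum_range_succ', pathTail_zero, mul_one, add_assoc,
            add_comm (_ • esymm _)]
          simp

end Tails

section KChains

variable {a b : ℕ}

def lollipopTip (h : 0 < a + b) : Fin (a + b + 0) := ⟨a + b - 1, by omega⟩

def barbellIsoRootJoin (c : ℕ) (h : 0 < a + b) :
    rootJoin (barbellG a b 0) (lollipopTip h) Set.univ (⊤ : SimpleGraph (Fin c)) ≃g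
      barbellG a b c where
  toEquiv := finSumFinEquiv
  map_rel_iff' {x y} := by
    rcases x with x | s <;> rcases y with y | t <;>
      simp [rootJoin, barbellG, lollipopTip, Fin.ext_iff] <;> omega

def lollipopIsoRootJoin (m : ℕ) (h : 0 < a + b) :
    rootJoin (barbellG a b 0) (lollipopTip h) {t : Fin m | (t : ℕ) = 0}
      (pathGraph m) ≃g
      barbellG a (b + m) 0 where
  toEquiv := finSumFinEquiv.trans (finCongr (by omega))
  map_rel_iff' {x y} := by
    rcases x with x | s <;> rcases y with y | t <;>
      simp [rootJoin, barbellG, lollipopTip, Fin.ext_iff, pathGraph_adj] <;> omega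

lemma dvd_rootedCsf_lollipopTip (h : 0 < a + b) (j : ℕ) :
    X j ∣ rootedCsf (barbellG a b 0) (lollipopTip h) j :=
  X_dvd_iff.2 fun _ => coeff_rootedCsf_eq_zero _ _

lemma csf_barbellG (c : ℕ) (h : 0 < a + b) :
    csf (barbellG a b c) =
      rootSum fun j => rootedCsf (barbellG a b 0) (lollipopTip h) j * cliqueTail c j := by
  rw [← (barbellIsoRootJoin c h).csf_eq, csf_rootJoin]

lemma csf_lollipop (m : ℕ) (h : 0 < a + b) :
    csf (barbellG a (b + m) 0) =
      rootSum fun j => rootedCsf (barbellG a b 0) (lollipopTip h) j * pathTail m j := by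
  rw [← (lollipopIsoRootJoin m h).csf_eq, csf_rootJoin]

end KChains

theorem stmt_19_general (a b c : ℕ) (ha : 1 ≤ a) :
    csf (barbellG a b c) =
      (c.factorial : ℚ) • csf (barbellG a (b + c) 0) -
        ∑ i ∈ Finset.range (c - 1),
          (((c.factorial * (c - i - 1) : ℕ) : ℚ) / ((c - i).factorial : ℚ)) •
            (csf (⊤ : SimpleGraph (Fin (c - i))) * csf (barbellG a (b + i) 0)) := by
  have h : 0 < a + b := by omega
  set R := fun j => rootedCsf (barbellG a b 0) (lollipopTip h) j
  set coeffs := fun i => ((c.factorial * (c - i - 1) : ℕ) : ℚ)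
  have hterm (i : ℕ) : (coeffs i / ((c - i).factorial : ℚ)) •
      (csf (⊤ : SimpleGraph (Fin (c - i))) * csf (barbellG a (b + i) 0)) =
      rootSum (coeffs i • fun j => esymm (c - i) * (R j * pathTail i j)) := by
    rw [csf_top, csf_lollipop i h, smul_mul_assoc, smul_smul,
      div_mul_cancel₀ _ (Nat.cast_ne_zero.2 (Nat.factorial_ne_zero _)),
      mul_rootSum _ fun j => (dvd_rootedCsf_lollipopTip h j).mul_right _, map_smul]
  have hlast :
      ∑ i ∈ range (c - 1), rootSum (coeffs i • fun j => esymm (c - i) * (R j * pathTail i j)) =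
        ∑ i ∈ range c, rootSum (coeffs i • fun j => esymm (c - i) * (R j * pathTail i j)) := by
    rcases c with _ | n
    · rfl
    · simp [Finset.sum_range_succ, coeffs]
  rw [csf_barbellG c h, csf_lollipop c h, Finset.sum_congr rfl fun i _ => hterm i, hlast,
    ← map_smul, ← map_sum, ← map_sub]
  refine congrArg rootSum (funext fun j => ?_)
  rw [eq_sub_of_add_eq (factorial_smul_pathTail c j).symm]
  simp [R, coeffs, mul_sub, Finset.mul_sum, Finset.sum_apply, mul_left_comm]

/-- For `a ≥ 1`, `b ≥ 0` and `c ≥ 2`,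
`X_{K(a1^b c)} = c! X_{K(a1^{b+c})} - Σ_{i=0}^{c-2} (c!(c-i-1)/(c-i)!) X_{K_{c-i}} X_{K(a1^{b+i})}`,
where the lollipop `K(a1^{b+i})` is the barbell with `c = 0` and `K_{c-i}` is complete. -/
theorem stmt_19 (a b c : ℕ) (ha : 1 ≤ a) (hc : 2 ≤ c) :
    csf (barbellG a b c) =
      (c.factorial : ℚ) • csf (barbellG a (b + c) 0) -
        ∑ i ∈ Finset.range (c - 1),
          (((c.factorial * (c - i - 1) : ℕ) : ℚ) / ((c - i).factorial : ℚ)) •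
            (csf (⊤ : SimpleGraph (Fin (c - i))) * csf (barbellG a (b + i) 0)) :=
  stmt_19_general a b c ha
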